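/- Let μ be a locally finite positive Borel measure on ℝ, S ∈ D a dyadic interval, and Λ a connected subset of D[S]∖{S} (connected in the tree order: if I ⊆ K ⊆ J with I, J ∈ Λ and K dyadic then K ∈ Λ). Then the Haar projection P_Λ f = ∑_{I ∈ Λ} Δ_I^μ f satisfies the pointwise bound |P_Λ f(x)| ≤ 2 M_μ(1_S f)(x), where M_μ is the dyadic maximal operator with respect to μ. -/

import Mathlib

open MeasureTheory Set
open scoped ENNReal NNReal

/-- The dyadic interval `[k·2ⁿ, (k+1)·2ⁿ)`. -/
def dyadicInterval (n k : ℤ) : Set ℝ :=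
  Set.Ico ((k : ℝ) * 2 ^ n) (((k : ℝ) + 1) * 2 ^ n)

/-- The dyadic maximal function with respect to the measure `μ`. -/
noncomputable def dyadicMaximal (μ : Measure ℝ) (f : ℝ → ℝ≥0∞) (x : ℝ) : ℝ≥0∞ :=
  ⨆ (n : ℤ) (k : ℤ) (_ : x ∈ dyadicInterval n k),
    (μ (dyadicInterval n k))⁻¹ * ∫⁻ y in dyadicInterval n k, f y ∂μ

/-- The `μ`-average of `f` over a set `I`. -/
noncomputable def dyadicAvg (μ : Measure ℝ) (f : ℝ → ℝ) (I : Set ℝ) : ℝ :=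
  (∫ y in I, f y ∂μ) / (μ I).toReal

/-- The weighted Haar (martingale difference) projection on the dyadic interval
indexed by `(n,k)`:
`Δ_I^μ f = (E_{I_-}^μ f)·1_{I_-} + (E_{I_+}^μ f)·1_{I_+} − (E_I^μ f)·1_I`. -/
noncomputable def haarDiff (μ : Measure ℝ) (f : ℝ → ℝ) (n k : ℤ) (x : ℝ) : ℝ :=
  (dyadicInterval (n - 1) (2 * k)).indicator
      (fun _ => dyadicAvg μ f (dyadicInterval (n - 1) (2 * k))) x
    + (dyadicInterval (n - 1) (2 * k + 1)).indicator
      (fun _ => dyadicAvg μ f (dyadicInterval (n - 1) (2 * k + 1))) x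
    - (dyadicInterval n k).indicator (fun _ => dyadicAvg μ f (dyadicInterval n k)) x

/-!
At a point `x`, the intervals of `Λ` containing `x` are the intervals `I_n ∋ x` of length `2ⁿ`
for `n` in a set `A` of consecutive integers, by connectedness. Along such a chain the Haar
differences telescope: `∑_{n ∈ [m, N]} Δ_{I_n} f(x) = E_{m-1} f(x) − E_N f(x)`, the averages of
`f` over the child of the smallest interval containing `x` and over the largest one. Both
intervals contain `x` and lie in `S`, so each average is at most `M_μ(1_S f)(x)`. Every finite
partial sum of `P_Λ f(x)` extends to such a chain sum, which bounds the (possibly infinite) sum.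
-/

noncomputable def dyadicIndex (n : ℤ) (x : ℝ) : ℤ := ⌊x / 2 ^ n⌋

theorem mem_dyadicInterval_iff {n k : ℤ} {x : ℝ} :
    x ∈ dyadicInterval n k ↔ dyadicIndex n x = k := by
  have h : (0 : ℝ) < 2 ^ n := by positivity
  rw [dyadicInterval, mem_Ico, dyadicIndex, Int.floor_eq_iff, le_div_iff₀ h, div_lt_iff₀ h]

theorem mem_dyadicInterval_dyadicIndex (n : ℤ) (x : ℝ) :
    x ∈ dyadicInterval n (dyadicIndex n x) :=
  mem_dyadicInterval_iff.2 rfl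

theorem dyadicIndex_add_natCast (n : ℤ) (e : ℕ) (x : ℝ) :
    dyadicIndex (n + e) x = dyadicIndex n x / 2 ^ e := by
  rw [dyadicIndex, dyadicIndex, zpow_add₀ two_ne_zero, ← div_div, zpow_natCast,
    ← Nat.cast_ofNat, ← Nat.cast_pow, Int.floor_div_natCast]
  push_cast
  rfl

theorem dyadicIndex_sub_one_ediv_two (n : ℤ) (x : ℝ) :
    dyadicIndex (n - 1) x / 2 = dyadicIndex n x := by
  simpa using (dyadicIndex_add_natCast (n - 1) 1 x).symm

theorem dyadicIndex_eq_of_le {n n' : ℤ} (h : n ≤ n') {x y : ℝ}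
    (hxy : dyadicIndex n x = dyadicIndex n y) : dyadicIndex n' x = dyadicIndex n' y := by
  obtain ⟨e, rfl⟩ := Int.exists_add_of_le h
  rw [dyadicIndex_add_natCast, dyadicIndex_add_natCast, hxy]

theorem dyadicInterval_subset_of_mem {n n' k k' : ℤ} (h : n ≤ n') {x : ℝ}
    (hx : x ∈ dyadicInterval n k) (hx' : x ∈ dyadicInterval n' k') :
    dyadicInterval n k ⊆ dyadicInterval n' k' := by
  intro y hy
  rw [mem_dyadicInterval_iff] at hx hx' hy ⊢
  rw [← hx', dyadicIndex_eq_of_le h (hy.trans hx.symm)]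

theorem Finset.sum_Icc_sub_one_sub {G : Type*} [AddCommGroup G] (g : ℤ → G) {m N : ℤ}
    (h : m ≤ N) : ∑ n ∈ Finset.Icc m N, (g (n - 1) - g n) = g (m - 1) - g N := by
  induction N, h using Int.leInduction with
  | base => simp
  | succ N hmN ih =>
    rw [← Finset.insert_Icc_right_eq_Icc_add_one (by omega),
      Finset.sum_insert (by simp), ih, add_sub_cancel_right]
    abel

theorem norm_tsum_le_of_forall_exists_superset {β E : Type*} [SeminormedAddCommGroup E]
    {g : β → E} {C : ℝ} (hC : 0 ≤ C)
    (h : ∀ s : Finset β, ∃ t, s ⊆ t ∧ ‖∑ b ∈ t, g b‖ ≤ C) : ‖∑' b, g b‖ ≤ C := by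
  by_cases hg : Summable g
  · refine isClosed_Iic.mem_of_frequently_of_tendsto ?_
      ((continuous_norm.tendsto _).comp hg.hasSum)
    exact Filter.frequently_atTop.2 h
  · simpa [tsum_eq_zero_of_not_summable hg] using hC

theorem norm_tsum_indicator_sub_le {E : Type*} [SeminormedAddCommGroup E] {A : Set ℤ}
    (hA : A.OrdConnected) {g : ℤ → E} {C : ℝ} (hC : 0 ≤ C)
    (hg : ∀ n ∈ A, ‖g (n - 1)‖ ≤ C ∧ ‖g n‖ ≤ C) :
    ‖∑' n, A.indicator (fun n => g (n - 1) - g n) n‖ ≤ 2 * C := by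
  classical
  refine norm_tsum_le_of_forall_exists_superset (by positivity) fun s => ?_
  have hsum (t : Finset ℤ) : ∑ n ∈ t, A.indicator (fun n => g (n - 1) - g n) n
      = ∑ n ∈ t.filter (· ∈ A), (g (n - 1) - g n) :=
    Finset.sum_indicator_eq_sum_filter t (fun _ => _) (fun _ => A) id
  rcases (s.filter (· ∈ A)).eq_empty_or_nonempty with hT | hT
  · refine ⟨s, subset_rfl, ?_⟩
    rw [hsum, hT, Finset.sum_empty, norm_zero]
    positivity
  set T := s.filter (· ∈ A)
  set m := T.min' hT
  set N := T.max' hT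
  have hmA : m ∈ A := (Finset.mem_filter.1 (T.min'_mem hT)).2
  have hNA : N ∈ A := (Finset.mem_filter.1 (T.max'_mem hT)).2
  have hmN : m ≤ N := T.min'_le _ (T.max'_mem hT)
  refine ⟨s ∪ Finset.Icc m N, Finset.subset_union_left, ?_⟩
  have hfilter : (s ∪ Finset.Icc m N).filter (· ∈ A) = Finset.Icc m N := by
    ext n
    simp only [Finset.mem_filter, Finset.mem_union, Finset.mem_Icc]
    constructor
    · rintro ⟨hn | hn, hnA⟩
      · have hnT : n ∈ T := Finset.mem_filter.2 ⟨hn, hnA⟩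
        exact ⟨T.min'_le n hnT, T.le_max' n hnT⟩
      · exact hn
    · intro hn
      exact ⟨Or.inr hn, hA.out hmA hNA hn⟩
  rw [hsum, hfilter, Finset.sum_Icc_sub_one_sub g hmN]
  calc ‖g (m - 1) - g N‖ ≤ ‖g (m - 1)‖ + ‖g N‖ := norm_sub_le _ _
    _ ≤ C + C := add_le_add (hg m hmA).1 (hg N hNA).2
    _ = 2 * C := by ring

section Haar

variable (μ : Measure ℝ) (f : ℝ → ℝ)

noncomputable def dyadicExpectation (n : ℤ) (x : ℝ) : ℝ :=
  dyadicAvg μ f (dyadicInterval n (dyadicIndex n x))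

theorem haarDiff_apply (n k : ℤ) (x : ℝ) :
    haarDiff μ f n k x = if dyadicIndex n x = k then
      dyadicExpectation μ f (n - 1) x - dyadicExpectation μ f n x else 0 := by
  classical
  have hchild := dyadicIndex_sub_one_ediv_two n x
  simp only [haarDiff, dyadicExpectation, indicator_apply, mem_dyadicInterval_iff]
  -- by `hchild`, `dyadicIndex (n - 1) x ∈ {2k, 2k + 1}` iff `dyadicIndex n x = k`
  split_ifs <;> first | omega | (subst_vars; simp_all)

theorem tsum_haarDiff_eq (Λ : Set (ℤ × ℤ)) (x : ℝ) :
    ∑' q : Λ, haarDiff μ f q.1.1 q.1.2 x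
      = ∑' n, ((fun n => (n, dyadicIndex n x)) ⁻¹' Λ).indicator
          (fun n => dyadicExpectation μ f (n - 1) x - dyadicExpectation μ f n x) n := by
  have hinj : Function.Injective fun n : ℤ => (n, dyadicIndex n x) :=
    fun _ _ h => congrArg Prod.fst h
  have hsupp : Function.support (Λ.indicator fun q => haarDiff μ f q.1 q.2 x)
      ⊆ range fun n => (n, dyadicIndex n x) := by
    intro q hq
    have hq' : haarDiff μ f q.1 q.2 x ≠ 0 := fun h => hq (indicator_apply_eq_zero.2 fun _ => h)
    rw [haarDiff_apply, ite_ne_right_iff] at hq'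
    exact ⟨q.1, Prod.ext rfl hq'.1⟩
  rw [tsum_subtype Λ fun q => haarDiff μ f q.1 q.2 x, ← hinj.tsum_eq hsupp]
  congr 1 with n
  rw [← indicator_comp_right fun n => (n, dyadicIndex n x)]
  simp only [Function.comp_def, haarDiff_apply, if_true]

theorem ofReal_abs_dyadicAvg_le (I : Set ℝ) :
    ENNReal.ofReal |dyadicAvg μ f I| ≤ (μ I)⁻¹ * ∫⁻ y in I, ENNReal.ofReal |f y| ∂μ := by
  rcases eq_or_lt_of_le (ENNReal.toReal_nonneg : 0 ≤ (μ I).toReal) with h0 | hpos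
  · simp [dyadicAvg, ← h0]
  have hfin : μ I ≠ ⊤ := (ENNReal.toReal_pos_iff.1 hpos).2.ne
  rw [dyadicAvg, abs_div, abs_of_pos hpos, ENNReal.ofReal_div_of_pos hpos,
    ENNReal.ofReal_toReal hfin, ENNReal.div_eq_inv_mul]
  gcongr
  simpa only [← Real.enorm_eq_ofReal_abs] using enorm_integral_le_lintegral_enorm f

theorem ofReal_abs_dyadicExpectation_le_dyadicMaximal {s : Set ℝ} {n : ℤ} {x : ℝ}
    (hs : dyadicInterval n (dyadicIndex n x) ⊆ s) :
    ENNReal.ofReal |dyadicExpectation μ f n x|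
      ≤ dyadicMaximal μ (fun y => ENNReal.ofReal |s.indicator f y|) x := by
  refine (ofReal_abs_dyadicAvg_le μ f _).trans ?_
  refine le_iSup₂_of_le n (dyadicIndex n x) (le_iSup_of_le
    (mem_dyadicInterval_dyadicIndex n x) (le_of_eq ?_))
  refine congrArg _ (setLIntegral_congr_fun measurableSet_Ico fun y hy => ?_)
  rw [indicator_of_mem (hs hy)]

end Haar

theorem stmt9_general (μ : Measure ℝ) (f : ℝ → ℝ)
    (nS kS : ℤ) (Λ : Set (ℤ × ℤ))
    (hΛsub : ∀ q ∈ Λ, dyadicInterval q.1 q.2 ⊆ dyadicInterval nS kS ∧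
      dyadicInterval q.1 q.2 ≠ dyadicInterval nS kS)
    (hconn : ∀ q ∈ Λ, ∀ q' ∈ Λ, ∀ n k : ℤ,
      dyadicInterval q.1 q.2 ⊆ dyadicInterval n k →
      dyadicInterval n k ⊆ dyadicInterval q'.1 q'.2 → (n, k) ∈ Λ) :
    ∀ x : ℝ,
      ENNReal.ofReal |∑' q : Λ, haarDiff μ f q.1.1 q.1.2 x|
        ≤ 2 * dyadicMaximal μ
            (fun y => ENNReal.ofReal |(dyadicInterval nS kS).indicator f y|) x := by
  intro x
  set M := dyadicMaximal μ (fun y => ENNReal.ofReal |(dyadicInterval nS kS).indicator f y|) x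
  rcases eq_or_ne M ⊤ with hM | hM
  · simp [hM]
  set A := (fun n => (n, dyadicIndex n x)) ⁻¹' Λ
  have hnest (n : ℤ) {m : ℤ} (hmn : m ≤ n) :
      dyadicInterval m (dyadicIndex m x) ⊆ dyadicInterval n (dyadicIndex n x) :=
    dyadicInterval_subset_of_mem hmn (mem_dyadicInterval_dyadicIndex m x)
      (mem_dyadicInterval_dyadicIndex n x)
  have hA : A.OrdConnected := ⟨fun m hm N hN n hn =>
    hconn _ hm _ hN n _ (hnest n hn.1) (hnest N hn.2)⟩
  have hbound {m n : ℤ} (hn : n ∈ A) (hmn : m ≤ n) : ‖dyadicExpectation μ f m x‖ ≤ M.toReal :=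
    (ENNReal.ofReal_le_iff_le_toReal hM).1
      (ofReal_abs_dyadicExpectation_le_dyadicMaximal μ f ((hnest n hmn).trans (hΛsub _ hn).1))
  rw [tsum_haarDiff_eq, ← ENNReal.ofReal_toReal hM, ← ENNReal.ofReal_ofNat 2,
    ← ENNReal.ofReal_mul zero_le_two]
  exact ENNReal.ofReal_le_ofReal (norm_tsum_indicator_sub_le hA ENNReal.toReal_nonneg
    fun n hn => ⟨hbound hn (by omega), hbound hn le_rfl⟩)

/-- If `Λ` is a connected (in the tree order) collection of dyadic intervals strictly
contained in the dyadic interval `S`, then the Haar projection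
`P_Λ f = ∑_{I ∈ Λ} Δ_I^μ f` satisfies `|P_Λ f(x)| ≤ 2 M_μ(1_S f)(x)` pointwise. -/
theorem stmt9 (μ : Measure ℝ) [IsLocallyFiniteMeasure μ] (f : ℝ → ℝ)
    (nS kS : ℤ) (Λ : Set (ℤ × ℤ))
    (hΛsub : ∀ q ∈ Λ, dyadicInterval q.1 q.2 ⊆ dyadicInterval nS kS ∧
      dyadicInterval q.1 q.2 ≠ dyadicInterval nS kS)
    (hconn : ∀ q ∈ Λ, ∀ q' ∈ Λ, ∀ n k : ℤ,
      dyadicInterval q.1 q.2 ⊆ dyadicInterval n k →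
      dyadicInterval n k ⊆ dyadicInterval q'.1 q'.2 → (n, k) ∈ Λ) :
    ∀ x : ℝ,
      ENNReal.ofReal |∑' q : Λ, haarDiff μ f q.1.1 q.1.2 x|
        ≤ 2 * dyadicMaximal μ
            (fun y => ENNReal.ofReal |(dyadicInterval nS kS).indicator f y|) x :=
  stmt9_general μ f nS kS Λ hΛsub hconn
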